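/- Consider a lax commutative square of distributive lattice homomorphisms f : A → B, g : A → C, u : B → D, v : C → D with u ∘ f ≤ v ∘ g, and the dual lax square of Priestley spaces v* : Spec D → Spec C, u* : Spec D → Spec B, g* : Spec C → Spec A, f* : Spec B → Spec A. Then the lattice square has the interpolation property (for all b ∈ B, c ∈ C with u(b) ≤ v(c) there is a ∈ A with b ≤ f(a), g(a) ≤ c) if and only if the dual square has the interpolation property (for all y ∈ Spec B, z ∈ Spec C with f*(y) ≤ g*(z) there is x ∈ Spec D with y ≤ u*(x) and v*(x) ≤ z). -/

import Mathlib

/-- A point of the Priestley dual of a bounded lattice `A`: a bounded lattice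
homomorphism `A → 2`, encoded as a `Bool`-valued function. -/
def IsSpecPoint {A : Type*} [Lattice A] [BoundedOrder A] (x : A → Bool) : Prop :=
  (∀ a b : A, x (a ⊓ b) = (x a && x b)) ∧ (∀ a b : A, x (a ⊔ b) = (x a || x b)) ∧
    x ⊤ = true ∧ x ⊥ = false

/-- The Priestley dual space of a bounded lattice `A`, with the pointwise order. -/
abbrev SpecL (A : Type*) [Lattice A] [BoundedOrder A] : Type _ :=
  {x : A → Bool // IsSpecPoint x}

/-! Both directions reduce to the prime filter-ideal theorem, in the form: in a bounded
distributive lattice, an inf-closed set lying nowhere below a sup-closed set is separated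
from it by a point of the spectrum.

Lattice ⇒ spaces: for `y`, `z` with `f* y ≤ g* z`, separate the image under `u` of the
true-set of `y` from the image under `v` of the false-set of `z`; interpolation makes
these two sets unrelated, and the separating point is the required `x`.

Spaces ⇒ lattices: if `u b ≤ v c` has no interpolant, separate `{a | b ≤ f a}` from
`{a | g a ≤ c}` by a point `p` of `Spec A`, then extend `p` along `f` to a `y` with
`y b = 1` and along `g` to a `z` with `z c = 0`. These satisfy `f* y ≤ p ≤ g* z`, so
an `x` with `y ≤ u* x` and `v* x ≤ z` exists, and `1 = x (u b) ≤ x (v c) = 0`. -/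

open Order

section Closures

variable {α : Type*} [Lattice α]

lemma SupClosed.isIdeal_lowerClosure {T : Set α} (hT : SupClosed T) (hne : T.Nonempty) :
    IsIdeal (lowerClosure T : Set α) := by
  refine ⟨(lowerClosure T).lower, hne.mono subset_lowerClosure, ?_⟩
  rintro a ⟨s, hs, has⟩ b ⟨t, ht, hbt⟩
  exact ⟨s ⊔ t, subset_lowerClosure (hT hs ht), le_sup_of_le_left has, le_sup_of_le_right hbt⟩

lemma InfClosed.isPFilter_upperClosure {S : Set α} (hS : InfClosed S) (hne : S.Nonempty) :
    IsPFilter (upperClosure S : Set α) := by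
  refine IsPFilter.of_def (hne.mono subset_upperClosure) ?_
    fun hab ha => (upperClosure S).upper hab ha
  rintro a ⟨s, hs, hsa⟩ b ⟨t, ht, htb⟩
  exact ⟨s ⊓ t, subset_upperClosure (hS hs ht), inf_le_of_left_le hsa, inf_le_of_right_le htb⟩

end Closures

namespace IsSpecPoint

variable {A : Type*} [Lattice A] [BoundedOrder A] {x : A → Bool}

lemma monotone (hx : IsSpecPoint x) : Monotone x := fun a b hab =>
  calc x a = x (a ⊓ b) := by rw [inf_eq_left.2 hab]
    _ ≤ x b := hx.1 a b ▸ Bool.and_le_right (x a) (x b)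

lemma eq_true_of_le (hx : IsSpecPoint x) {a b : A} (hab : a ≤ b) (ha : x a = true) :
    x b = true :=
  Bool.le_iff_imp.1 (hx.monotone hab) ha

lemma eq_false_of_le (hx : IsSpecPoint x) {a b : A} (hab : a ≤ b) (hb : x b = false) :
    x a = false :=
  Bool.eq_false_iff.2 fun ha => Bool.false_ne_true (hb ▸ hx.eq_true_of_le hab ha)

lemma infClosed_eq_true (hx : IsSpecPoint x) : InfClosed {a | x a = true} := fun a ha b hb => by
  simp_all only [Set.mem_ofPred_eq, hx.1, Bool.and_self]

lemma supClosed_eq_false (hx : IsSpecPoint x) : SupClosed {a | x a = false} := fun a ha b hb => by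
  simp_all only [Set.mem_ofPred_eq, hx.2.1, Bool.or_self]

open Classical in
lemma of_isPrime {J : Ideal A} (hJ : J.IsPrime) : IsSpecPoint fun a => decide (a ∉ J) := by
  have inf_mem_iff {a b : A} : a ⊓ b ∈ J ↔ a ∈ J ∨ b ∈ J :=
    ⟨hJ.mem_or_mem, fun h => h.elim (J.lower inf_le_left) (J.lower inf_le_right)⟩
  refine ⟨fun a b => ?_, fun a b => ?_, ?_, ?_⟩
  · simp only [inf_mem_iff, not_or, Bool.decide_and]
  · simp only [Ideal.sup_mem_iff, not_and_or, Bool.decide_or]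
  · simpa using hJ.top_notMem
  · simp

end IsSpecPoint

theorem exists_specPoint_separating {D : Type*} [DistribLattice D] [BoundedOrder D]
    {S T : Set D} (hS : InfClosed S) (hT : SupClosed T) (hSne : S.Nonempty) (hTne : T.Nonempty)
    (hST : ∀ s ∈ S, ∀ t ∈ T, ¬s ≤ t) :
    ∃ x : SpecL D, (∀ s ∈ S, x.1 s = true) ∧ ∀ t ∈ T, x.1 t = false := by
  have hdisj : Disjoint ((hS.isPFilter_upperClosure hSne).toPFilter : Set D)
      (hT.isIdeal_lowerClosure hTne).toIdeal := by
    rw [Set.disjoint_left]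
    rintro d ⟨s, hs, hsd⟩ ⟨t, ht, hdt⟩
    exact hST s hs t ht (hsd.trans hdt)
  obtain ⟨J, hJ, hTJ, hSJ⟩ := DistribLattice.prime_ideal_of_disjoint_filter_ideal hdisj
  refine ⟨⟨_, IsSpecPoint.of_isPrime hJ⟩, fun s hs => ?_, fun t ht => ?_⟩
  · simpa using Set.disjoint_left.1 hSJ (subset_upperClosure hs)
  · simpa using hTJ (subset_lowerClosure ht)

theorem specL_interpolation_of_interpolation {A B C D : Type*} [Lattice A] [BoundedOrder A]
    [Lattice B] [BoundedOrder B] [Lattice C] [BoundedOrder C] [DistribLattice D] [BoundedOrder D]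
    (f : BoundedLatticeHom A B) (g : BoundedLatticeHom A C)
    (u : BoundedLatticeHom B D) (v : BoundedLatticeHom C D)
    (hint : ∀ (b : B) (c : C), u b ≤ v c → ∃ a : A, b ≤ f a ∧ g a ≤ c)
    (y : SpecL B) (z : SpecL C) (hyz : ∀ a : A, y.1 (f a) ≤ z.1 (g a)) :
    ∃ x : SpecL D, (∀ b : B, y.1 b ≤ x.1 (u b)) ∧ ∀ c : C, x.1 (v c) ≤ z.1 c := by
  obtain ⟨x, hxu, hxv⟩ := exists_specPoint_separating
    (y.2.infClosed_eq_true.image u) (z.2.supClosed_eq_false.image v)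
    ⟨u ⊤, ⊤, y.2.2.2.1, rfl⟩ ⟨v ⊥, ⊥, z.2.2.2.2, rfl⟩ (by
      rintro _ ⟨b, hb, rfl⟩ _ ⟨c, hc, rfl⟩ hbc
      obtain ⟨a, hba, hac⟩ := hint b c hbc
      have hga : z.1 (g a) = false := z.2.eq_false_of_le hac hc
      exact Bool.false_ne_true (hga ▸ Bool.le_iff_imp.1 (hyz a) (y.2.eq_true_of_le hba hb)))
  refine ⟨x, fun b => Bool.le_iff_imp.2 fun hb => hxu _ ⟨b, hb, rfl⟩, fun c => ?_⟩
  cases hc : z.1 c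
  · exact (hxv _ ⟨c, hc, rfl⟩).le
  · exact le_top

theorem interpolation_of_specL_interpolation {A B C D : Type*}
    [DistribLattice A] [BoundedOrder A] [DistribLattice B] [BoundedOrder B]
    [DistribLattice C] [BoundedOrder C] [Lattice D] [BoundedOrder D]
    (f : BoundedLatticeHom A B) (g : BoundedLatticeHom A C)
    (u : BoundedLatticeHom B D) (v : BoundedLatticeHom C D)
    (hspec : ∀ (y : SpecL B) (z : SpecL C), (∀ a : A, y.1 (f a) ≤ z.1 (g a)) →
      ∃ x : SpecL D, (∀ b : B, y.1 b ≤ x.1 (u b)) ∧ ∀ c : C, x.1 (v c) ≤ z.1 c)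
    (b : B) (c : C) (hbc : u b ≤ v c) : ∃ a : A, b ≤ f a ∧ g a ≤ c := by
  by_contra! hno
  have hIci : InfClosed (Set.Ici b) := fun _ h₁ _ h₂ => le_inf h₁ h₂
  have hIic : SupClosed (Set.Iic c) := fun _ h₁ _ h₂ => sup_le h₁ h₂
  obtain ⟨p, hpf, hpg⟩ := exists_specPoint_separating (hIci.preimage f) (hIic.preimage g)
    ⟨⊤, by simp⟩ ⟨⊥, by simp⟩ fun s hs t ht hst => hno t (hs.trans (OrderHomClass.mono f hst)) ht
  obtain ⟨y, hyb, hyf⟩ := exists_specPoint_separating hIci (p.2.supClosed_eq_false.image f)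
    ⟨b, le_rfl⟩ ⟨f ⊥, ⊥, p.2.2.2.2, rfl⟩ (by
      rintro s hs _ ⟨a, ha, rfl⟩ hsa
      exact absurd ha (by simp [hpf a (hs.trans hsa)]))
  obtain ⟨z, hzg, hzc⟩ := exists_specPoint_separating (p.2.infClosed_eq_true.image g) hIic
    ⟨g ⊤, ⊤, p.2.2.2.1, rfl⟩ ⟨c, le_rfl⟩ (by
      rintro _ ⟨a, ha, rfl⟩ t ht hat
      exact absurd ha (by simp [hpg a (hat.trans ht)]))
  have hyz : ∀ a : A, y.1 (f a) ≤ z.1 (g a) := fun a => by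
    cases hpa : p.1 a
    · simp [hyf (f a) ⟨a, hpa, rfl⟩]
    · simp [hzg (g a) ⟨a, hpa, rfl⟩]
  obtain ⟨x, hxu, hxv⟩ := hspec y z hyz
  have hub : x.1 (u b) = true := Bool.le_iff_imp.1 (hxu b) (hyb b le_rfl)
  have hvc : x.1 (v c) = false := le_antisymm (hzc c le_rfl ▸ hxv c) bot_le
  exact Bool.false_ne_true (hvc ▸ x.2.eq_true_of_le hbc hub)

theorem stmt_8_general {A B C D : Type*} [DistribLattice A] [BoundedOrder A]
    [DistribLattice B] [BoundedOrder B] [DistribLattice C] [BoundedOrder C]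
    [DistribLattice D] [BoundedOrder D]
    (f : BoundedLatticeHom A B) (g : BoundedLatticeHom A C)
    (u : BoundedLatticeHom B D) (v : BoundedLatticeHom C D) :
    (∀ (b : B) (c : C), u b ≤ v c → ∃ a : A, b ≤ f a ∧ g a ≤ c) ↔
      ∀ (y : SpecL B) (z : SpecL C),
        (∀ a : A, y.1 (f a) ≤ z.1 (g a)) →
          ∃ x : SpecL D, (∀ b : B, y.1 b ≤ x.1 (u b)) ∧ ∀ c : C, x.1 (v c) ≤ z.1 c :=
  ⟨specL_interpolation_of_interpolation f g u v, interpolation_of_specL_interpolation f g u v⟩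

/-- (Self-duality of interpolation.) A lax commutative square
`u ∘ f ≤ v ∘ g` of bounded distributive lattice homomorphisms has the interpolation
property iff its Priestley dual square (given by precomposition) has the interpolation
property. -/
theorem stmt_8 {A B C D : Type*} [DistribLattice A] [BoundedOrder A]
    [DistribLattice B] [BoundedOrder B] [DistribLattice C] [BoundedOrder C]
    [DistribLattice D] [BoundedOrder D]
    (f : BoundedLatticeHom A B) (g : BoundedLatticeHom A C)
    (u : BoundedLatticeHom B D) (v : BoundedLatticeHom C D)
    (hlax : ∀ a : A, u (f a) ≤ v (g a)) :
    (∀ (b : B) (c : C), u b ≤ v c → ∃ a : A, b ≤ f a ∧ g a ≤ c) ↔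
      ∀ (y : SpecL B) (z : SpecL C),
        (∀ a : A, y.1 (f a) ≤ z.1 (g a)) →
          ∃ x : SpecL D, (∀ b : B, y.1 b ≤ x.1 (u b)) ∧ ∀ c : C, x.1 (v c) ≤ z.1 c :=
  stmt_8_general f g u v
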